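/- Upper bound for the symmetric part of the bilinear form: let K : ℝ^d × ℝ^d → ℝ be a measurable kernel satisfying the tail bounds with constant Λ. Then there is a constant C, depending only on d, s and Λ, such that for every measurable g : ℝ^d → ℝ one has ∬_{ℝ^d × ℝ^d} |g(v) − g(v')|² |K(v,v')| dv' dv ≤ C ‖g‖²_{Ḣ^s}, as an inequality in [0,∞]. -/

import Mathlib

open MeasureTheory Metric Set ENNReal

noncomputable section

/-- A measurable kernel `K : ℝ^d × ℝ^d → ℝ` satisfies the tail bounds with constant `Λ`
if for every `v` and every `r > 0`, both `∫_{ℝ^d ∖ B_r(v)} |K(v,v')| dv' ≤ Λ r^{-2s}`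
and `∫_{ℝ^d ∖ B_r(v)} |K(v',v)| dv' ≤ Λ r^{-2s}`. -/
def TailBounds (d : ℕ) (s Λ : ℝ)
    (K : EuclideanSpace ℝ (Fin d) → EuclideanSpace ℝ (Fin d) → ℝ) : Prop :=
  ∀ (v : EuclideanSpace ℝ (Fin d)) (r : ℝ), 0 < r →
    (∫⁻ v' in (Metric.ball v r)ᶜ, ENNReal.ofReal |K v v'|) ≤
        ENNReal.ofReal (Λ * r ^ (-(2 * s))) ∧
    (∫⁻ v' in (Metric.ball v r)ᶜ, ENNReal.ofReal |K v' v|) ≤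
        ENNReal.ofReal (Λ * r ^ (-(2 * s)))



lemma measurable_rpow_const' (c : ℝ) : Measurable fun t : ℝ => t ^ c := by measurability

def Cgeo (d : ℕ) (s : ℝ) : ENNReal := (1 - ENNReal.ofReal (2 ^ (-((d:ℝ) + 2*s))))⁻¹

lemma q_lt_one {d : ℕ} {s : ℝ} (hd : 1 ≤ d) (hs : 0 < s) :
    (2:ℝ) ^ (-((d:ℝ) + 2*s)) < 1 := by
  apply Real.rpow_lt_one_of_one_lt_of_neg one_lt_two
  have : (0:ℝ) < (d:ℝ) + 2*s := by positivity
  linarith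

lemma Cgeo_lt_top {d : ℕ} {s : ℝ} (hd : 1 ≤ d) (hs : 0 < s) : Cgeo d s < ⊤ := by
  rw [Cgeo, ENNReal.inv_lt_top]
  have h := q_lt_one hd hs
  have : ENNReal.ofReal ((2:ℝ) ^ (-((d:ℝ) + 2*s))) < 1 := by
    rw [← ENNReal.ofReal_one]
    exact ENNReal.ofReal_lt_ofReal_iff_of_nonneg (by positivity) |>.mpr h
  exact tsub_pos_of_lt this

lemma Cgeo_pos {d : ℕ} {s : ℝ} : 0 < Cgeo d s := by
  rw [Cgeo]
  apply ENNReal.inv_pos.mpr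
  exact (tsub_le_self.trans_lt ENNReal.one_lt_top).ne

lemma tail_decay {d : ℕ} (hd : 1 ≤ d) {s Λ : ℝ} (hs : 0 < s) (hΛ : 0 ≤ Λ)
    (v : EuclideanSpace ℝ (Fin d)) (F : EuclideanSpace ℝ (Fin d) → ℝ)
    (hF : ∀ r : ℝ, 0 < r →
      (∫⁻ x in (ball v r)ᶜ, ENNReal.ofReal |F x|) ≤ ENNReal.ofReal (Λ * r ^ (-(2*s))))
    {R : ℝ} (hR : 0 < R) :
    (∫⁻ x in (ball v R)ᶜ, ENNReal.ofReal (‖x - v‖ ^ (-(d:ℝ))) * ENNReal.ofReal |F x|)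
      ≤ Cgeo d s * ENNReal.ofReal (Λ * R ^ (-((d:ℝ) + 2*s))) := by
  set A : ℕ → Set (EuclideanSpace ℝ (Fin d)) :=
    fun j => (ball v (R * 2^j))ᶜ ∩ ball v (R * 2^(j+1)) with hA
  have hsub : (ball v R)ᶜ ⊆ ⋃ j, A j := by
    intro x hx
    have hx' : R ≤ dist x v := by
      simpa [not_lt] using hx
    have h1 : (1:ℝ) ≤ dist x v / R := (one_le_div hR).mpr hx'
    obtain ⟨n, hn1, hn2⟩ := exists_nat_pow_near h1 one_lt_two
    refine mem_iUnion.mpr ⟨n, ?_, ?_⟩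
    · simp only [mem_compl_iff, mem_ball, not_lt]
      rw [mul_comm]
      exact (le_div_iff₀ hR).mp hn1
    · simp only [mem_ball]
      rw [mul_comm]
      exact (div_lt_iff₀ hR).mp hn2
  calc ∫⁻ x in (ball v R)ᶜ, ENNReal.ofReal (‖x - v‖ ^ (-(d:ℝ))) * ENNReal.ofReal |F x|
      ≤ ∫⁻ x in ⋃ j, A j, ENNReal.ofReal (‖x - v‖ ^ (-(d:ℝ))) * ENNReal.ofReal |F x| :=
        lintegral_mono_set hsub
    _ ≤ ∑' j, ∫⁻ x in A j, ENNReal.ofReal (‖x - v‖ ^ (-(d:ℝ))) * ENNReal.ofReal |F x| :=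
        lintegral_iUnion_le _ _
    _ ≤ ∑' j, ENNReal.ofReal (Λ * R ^ (-((d:ℝ) + 2*s))) *
          (ENNReal.ofReal ((2:ℝ) ^ (-((d:ℝ) + 2*s))))^j := by
        refine ENNReal.tsum_le_tsum fun j => ?_
        have hRj : (0:ℝ) < R * 2^j := by positivity
        have hmeas : MeasurableSet (A j) :=
          (measurableSet_ball.compl).inter measurableSet_ball
        have step1 : ∫⁻ x in A j, ENNReal.ofReal (‖x - v‖ ^ (-(d:ℝ))) * ENNReal.ofReal |F x|
            ≤ ∫⁻ x in A j, ENNReal.ofReal ((R * 2^j) ^ (-(d:ℝ))) * ENNReal.ofReal |F x| := by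
          refine setLIntegral_mono' hmeas fun x hx => ?_
          refine mul_le_mul_left (ENNReal.ofReal_le_ofReal ?_) _
          apply Real.rpow_le_rpow_of_nonpos hRj _ (neg_nonpos.mpr (Nat.cast_nonneg d))
          have : x ∉ ball v (R * 2^j) := hx.1
          simpa [dist_eq_norm, not_lt] using this
        have step2 : ∫⁻ x in A j, ENNReal.ofReal ((R * 2^j) ^ (-(d:ℝ))) * ENNReal.ofReal |F x|
            = ENNReal.ofReal ((R * 2^j) ^ (-(d:ℝ))) * ∫⁻ x in A j, ENNReal.ofReal |F x| :=
          lintegral_const_mul' _ _ ENNReal.ofReal_ne_top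
        have step3 : ∫⁻ x in A j, ENNReal.ofReal |F x|
            ≤ ENNReal.ofReal (Λ * (R * 2^j) ^ (-(2*s))) :=
          (lintegral_mono_set inter_subset_left).trans (hF _ hRj)
        have key : ENNReal.ofReal ((R * 2^j) ^ (-(d:ℝ))) *
              ENNReal.ofReal (Λ * (R * 2^j) ^ (-(2*s)))
            = ENNReal.ofReal (Λ * R ^ (-((d:ℝ) + 2*s))) *
              (ENNReal.ofReal ((2:ℝ) ^ (-((d:ℝ) + 2*s))))^j := by
          rw [← ENNReal.ofReal_mul (by positivity), ← ENNReal.ofReal_pow (by positivity),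
            ← ENNReal.ofReal_mul (by positivity)]
          congr 1
          have h2j : (0:ℝ) < (2:ℝ)^j := by positivity
          have e1 : (R*2^j)^(-(d:ℝ)) * (Λ * (R*2^j)^(-(2*s)))
              = Λ * (R*2^j) ^ (-((d:ℝ)+2*s)) := by
            rw [show -((d:ℝ)+2*s) = -(d:ℝ) + -(2*s) by ring, Real.rpow_add hRj]
            ring
          have e2 : (R*2^j) ^ (-((d:ℝ)+2*s))
              = R ^ (-((d:ℝ)+2*s)) * ((2:ℝ) ^ (-((d:ℝ)+2*s)))^j := by
            rw [Real.mul_rpow hR.le h2j.le, ← Real.rpow_natCast ((2:ℝ) ^ (-((d:ℝ)+2*s))) j,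
              ← Real.rpow_natCast (2:ℝ) j, ← Real.rpow_mul (by norm_num),
              ← Real.rpow_mul (by norm_num), mul_comm ((j:ℝ)) (-((d:ℝ)+2*s))]
          rw [e1, e2]
          ring
        calc ∫⁻ x in A j, ENNReal.ofReal (‖x - v‖ ^ (-(d:ℝ))) * ENNReal.ofReal |F x|
            ≤ ENNReal.ofReal ((R * 2^j) ^ (-(d:ℝ))) * ∫⁻ x in A j, ENNReal.ofReal |F x| :=
              step1.trans_eq step2
          _ ≤ ENNReal.ofReal ((R * 2^j) ^ (-(d:ℝ))) *
                ENNReal.ofReal (Λ * (R * 2^j) ^ (-(2*s))) := by gcongr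
          _ = _ := key
    _ = ENNReal.ofReal (Λ * R ^ (-((d:ℝ) + 2*s))) *
          (1 - ENNReal.ofReal ((2:ℝ) ^ (-((d:ℝ) + 2*s))))⁻¹ := by
        rw [ENNReal.tsum_mul_left, ENNReal.tsum_geometric]
    _ = Cgeo d s * ENNReal.ofReal (Λ * R ^ (-((d:ℝ) + 2*s))) := by rw [Cgeo, mul_comm]

section Main

variable {d : ℕ}

local notation "𝔼" => EuclideanSpace ℝ (Fin d)

lemma T1_bound (hd : 1 ≤ d) {s Λ : ℝ} (hs : 0 < s) (hΛ : 0 ≤ Λ)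
    (K : 𝔼 → 𝔼 → ℝ) (hK : Measurable (Function.uncurry K))
    (g : 𝔼 → ℝ) (hg : Measurable g) (v : 𝔼)
    (hF : ∀ r : ℝ, 0 < r →
      (∫⁻ x in (ball v r)ᶜ, ENNReal.ofReal |K v x|) ≤ ENNReal.ofReal (Λ * r ^ (-(2*s)))) :
    (∫⁻ v', ENNReal.ofReal (‖v - v'‖ ^ (-(d:ℝ))) *
        (∫⁻ w in ball v ‖v - v'‖, ENNReal.ofReal (|g v - g w|^2)) * ENNReal.ofReal |K v v'|)
      ≤ Cgeo d s * ENNReal.ofReal Λ *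
        ∫⁻ w, ENNReal.ofReal (|g v - g w|^2 * ‖v - w‖ ^ (-(d:ℝ) - 2*s)) := by
  set f : 𝔼 → ℝ≥0∞ := fun w => ENNReal.ofReal (|g v - g w|^2) with hf
  set c : 𝔼 → ℝ≥0∞ := fun v' =>
    ENNReal.ofReal (‖v - v'‖ ^ (-(d:ℝ))) * ENNReal.ofReal |K v v'| with hc
  have hrp : Measurable fun t : ℝ => t ^ (-(d:ℝ)) := measurable_rpow_const' _
  have hfm : Measurable f := by
    apply Measurable.ennreal_ofReal
    exact (measurable_const.sub hg).abs.pow_const 2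
  have hcm : Measurable c := by
    apply Measurable.mul (f := fun v' => ENNReal.ofReal (‖v - v'‖ ^ (-(d:ℝ))))
      (g := fun v' => ENNReal.ofReal |K v v'|)
    · exact (hrp.comp (continuous_const.sub continuous_id).norm.measurable).ennreal_ofReal
    · exact (((hK.comp measurable_prodMk_left)).abs).ennreal_ofReal
  have hcfin : ∀ v', c v' ≠ ⊤ := fun v' =>
    ENNReal.mul_ne_top ENNReal.ofReal_ne_top ENNReal.ofReal_ne_top
  have key1 : ∀ v', ENNReal.ofReal (‖v - v'‖ ^ (-(d:ℝ))) *
        (∫⁻ w in ball v ‖v - v'‖, f w) * ENNReal.ofReal |K v v'|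
      = ∫⁻ w, (ball v ‖v - v'‖).indicator (fun w => f w * c v') w := by
    intro v'
    rw [lintegral_indicator measurableSet_ball, lintegral_mul_const' (c v') f (hcfin v'), hc]
    ring
  have hΦ : Measurable (fun p : 𝔼 × 𝔼 =>
      (ball v ‖v - p.1‖).indicator (fun w => f w * c p.1) p.2) := by
    have heq : (fun p : 𝔼 × 𝔼 => (ball v ‖v - p.1‖).indicator (fun w => f w * c p.1) p.2)
        = Set.indicator {q : 𝔼 × 𝔼 | dist q.2 v < ‖v - q.1‖} (fun q => f q.2 * c q.1) := by
      classical
      funext p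
      rw [Set.indicator_apply, Set.indicator_apply, mem_ball]
      simp only [Set.mem_setOf_eq]
    rw [heq]
    refine Measurable.indicator ((hfm.comp measurable_snd).mul (hcm.comp measurable_fst)) ?_
    exact measurableSet_lt
      (measurable_snd.dist measurable_const)
      ((continuous_const.sub continuous_fst).norm.measurable)
  have hswap : (∫⁻ v', ∫⁻ w, (ball v ‖v - v'‖).indicator (fun w => f w * c v') w)
      = ∫⁻ w, ∫⁻ v', (ball v ‖v - v'‖).indicator (fun w' => f w' * c v') w :=
    lintegral_lintegral_swap hΦ.aemeasurable
  haveI : Inhabited (Fin d) := ⟨⟨0, hd⟩⟩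
  haveI : Nontrivial 𝔼 := inferInstance
  have h0 : ∀ᵐ (w : 𝔼) ∂volume, w ≠ v := by
    rw [ae_iff]
    simpa using measure_singleton (μ := (volume : Measure 𝔼)) v
  have hae : ∀ᵐ (w : 𝔼) ∂volume,
      (∫⁻ v', (ball v ‖v - v'‖).indicator (fun w' => f w' * c v') w)
        ≤ f w * (Cgeo d s * ENNReal.ofReal (Λ * ‖v - w‖ ^ (-((d:ℝ) + 2*s)))) := by
    filter_upwards [h0] with w hw
    have hR : 0 < dist w v := dist_pos.mpr hw
    have hset : MeasurableSet {v' : 𝔼 | dist w v < ‖v - v'‖} :=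
      measurableSet_lt measurable_const (continuous_const.sub continuous_id).norm.measurable
    calc (∫⁻ v', (ball v ‖v - v'‖).indicator (fun w' => f w' * c v') w)
        = ∫⁻ v', Set.indicator {v' : 𝔼 | dist w v < ‖v - v'‖} (fun v' => f w * c v') v' := by
          classical
          apply lintegral_congr; intro v'
          rw [Set.indicator_apply, Set.indicator_apply, mem_ball]
          simp only [Set.mem_setOf_eq]
      _ = ∫⁻ v' in {v' : 𝔼 | dist w v < ‖v - v'‖}, f w * c v' :=
          lintegral_indicator hset _
      _ = f w * ∫⁻ v' in {v' : 𝔼 | dist w v < ‖v - v'‖}, c v' :=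
          lintegral_const_mul' _ _ ENNReal.ofReal_ne_top
      _ ≤ f w * ∫⁻ v' in (ball v (dist w v))ᶜ, c v' := by
          refine mul_le_mul_right (lintegral_mono_set ?_) _
          intro v' hv'
          have h1 : dist w v < ‖v - v'‖ := hv'
          have h2 : ‖v - v'‖ = dist v' v := by rw [dist_eq_norm, norm_sub_rev]
          rw [mem_compl_iff, mem_ball, not_lt, ← h2]
          exact h1.le
      _ ≤ f w * (Cgeo d s * ENNReal.ofReal (Λ * (dist w v) ^ (-((d:ℝ) + 2*s)))) := by
          refine mul_le_mul_right ?_ _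
          have heq : (∫⁻ v' in (ball v (dist w v))ᶜ, c v')
              = ∫⁻ x in (ball v (dist w v))ᶜ,
                  ENNReal.ofReal (‖x - v‖ ^ (-(d:ℝ))) * ENNReal.ofReal |K v x| := by
            apply lintegral_congr; intro x
            rw [hc, norm_sub_rev]
          rw [heq]
          exact tail_decay hd hs hΛ v (K v) hF hR
      _ = f w * (Cgeo d s * ENNReal.ofReal (Λ * ‖v - w‖ ^ (-((d:ℝ) + 2*s)))) := by
          rw [dist_eq_norm, norm_sub_rev]
  have hfin : Cgeo d s * ENNReal.ofReal Λ ≠ ⊤ :=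
    ENNReal.mul_ne_top (Cgeo_lt_top hd hs).ne ENNReal.ofReal_ne_top
  calc (∫⁻ v', ENNReal.ofReal (‖v - v'‖ ^ (-(d:ℝ))) *
        (∫⁻ w in ball v ‖v - v'‖, ENNReal.ofReal (|g v - g w|^2)) * ENNReal.ofReal |K v v'|)
      = ∫⁻ v', ∫⁻ w, (ball v ‖v - v'‖).indicator (fun w => f w * c v') w :=
        lintegral_congr key1
    _ = ∫⁻ w, ∫⁻ v', (ball v ‖v - v'‖).indicator (fun w' => f w' * c v') w := hswap
    _ ≤ ∫⁻ w, f w * (Cgeo d s * ENNReal.ofReal (Λ * ‖v - w‖ ^ (-((d:ℝ) + 2*s)))) :=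
        lintegral_mono_ae hae
    _ = Cgeo d s * ENNReal.ofReal Λ *
          ∫⁻ w, ENNReal.ofReal (|g v - g w|^2 * ‖v - w‖ ^ (-(d:ℝ) - 2*s)) := by
        rw [← lintegral_const_mul' _ _ hfin]
        apply lintegral_congr; intro w
        have h1 : (-(d:ℝ) - 2*s) = -((d:ℝ) + 2*s) := by ring
        rw [h1, ENNReal.ofReal_mul hΛ,
          ENNReal.ofReal_mul (by positivity : (0:ℝ) ≤ |g v - g w|^2), hf]
        ring

lemma T2_bound (hd : 1 ≤ d) {s Λ : ℝ} (hs : 0 < s) (hΛ : 0 ≤ Λ)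
    (K : 𝔼 → 𝔼 → ℝ) (hK : Measurable (Function.uncurry K))
    (g : 𝔼 → ℝ) (hg : Measurable g) (v' : 𝔼)
    (hF : ∀ r : ℝ, 0 < r →
      (∫⁻ x in (ball v' r)ᶜ, ENNReal.ofReal |K x v'|) ≤ ENNReal.ofReal (Λ * r ^ (-(2*s)))) :
    (∫⁻ v, ENNReal.ofReal (‖v - v'‖ ^ (-(d:ℝ))) *
        (∫⁻ w in ball v ‖v - v'‖, ENNReal.ofReal (|g w - g v'|^2)) * ENNReal.ofReal |K v v'|)
      ≤ Cgeo d s * ENNReal.ofReal Λ * ENNReal.ofReal ((2:ℝ) ^ ((d:ℝ) + 2*s)) *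
        ∫⁻ w, ENNReal.ofReal (|g w - g v'|^2 * ‖w - v'‖ ^ (-(d:ℝ) - 2*s)) := by
  classical
  set f : 𝔼 → ℝ≥0∞ := fun w => ENNReal.ofReal (|g w - g v'|^2) with hf
  set c : 𝔼 → ℝ≥0∞ := fun v =>
    ENNReal.ofReal (‖v - v'‖ ^ (-(d:ℝ))) * ENNReal.ofReal |K v v'| with hc
  have hrp : Measurable fun t : ℝ => t ^ (-(d:ℝ)) := measurable_rpow_const' _
  have hfm : Measurable f := by
    apply Measurable.ennreal_ofReal
    exact ((hg.sub measurable_const)).abs.pow_const 2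
  have hcm : Measurable c := by
    apply Measurable.mul (f := fun v => ENNReal.ofReal (‖v - v'‖ ^ (-(d:ℝ))))
      (g := fun v => ENNReal.ofReal |K v v'|)
    · exact (hrp.comp (continuous_id.sub continuous_const).norm.measurable).ennreal_ofReal
    · exact (((hK.comp (measurable_prodMk_right))).abs).ennreal_ofReal
  have hcfin : ∀ v, c v ≠ ⊤ := fun v =>
    ENNReal.mul_ne_top ENNReal.ofReal_ne_top ENNReal.ofReal_ne_top
  have key1 : ∀ v, ENNReal.ofReal (‖v - v'‖ ^ (-(d:ℝ))) *
        (∫⁻ w in ball v ‖v - v'‖, f w) * ENNReal.ofReal |K v v'|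
      = ∫⁻ w, (ball v ‖v - v'‖).indicator (fun w => f w * c v) w := by
    intro v
    rw [lintegral_indicator measurableSet_ball, lintegral_mul_const' (c v) f (hcfin v), hc]
    ring
  have hΦ : Measurable (fun p : 𝔼 × 𝔼 =>
      (ball p.1 ‖p.1 - v'‖).indicator (fun w => f w * c p.1) p.2) := by
    have heq : (fun p : 𝔼 × 𝔼 => (ball p.1 ‖p.1 - v'‖).indicator (fun w => f w * c p.1) p.2)
        = Set.indicator {q : 𝔼 × 𝔼 | dist q.2 q.1 < ‖q.1 - v'‖} (fun q => f q.2 * c q.1) := by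
      funext p
      rw [Set.indicator_apply, Set.indicator_apply, mem_ball]
      simp only [Set.mem_setOf_eq]
    rw [heq]
    refine Measurable.indicator ((hfm.comp measurable_snd).mul (hcm.comp measurable_fst)) ?_
    exact measurableSet_lt
      (measurable_snd.dist measurable_fst)
      ((continuous_fst.sub continuous_const).norm.measurable)
  have hswap : (∫⁻ v, ∫⁻ w, (ball v ‖v - v'‖).indicator (fun w => f w * c v) w)
      = ∫⁻ w, ∫⁻ v, (ball v ‖v - v'‖).indicator (fun w' => f w' * c v) w :=
    lintegral_lintegral_swap hΦ.aemeasurable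
  haveI : Inhabited (Fin d) := ⟨⟨0, hd⟩⟩
  haveI : Nontrivial 𝔼 := inferInstance
  have h0 : ∀ᵐ (w : 𝔼) ∂volume, w ≠ v' := by
    rw [ae_iff]
    simpa using measure_singleton (μ := (volume : Measure 𝔼)) v'
  have hepos : (0:ℝ) < (d:ℝ) + 2*s := by positivity
  have hae : ∀ᵐ (w : 𝔼) ∂volume,
      (∫⁻ v, (ball v ‖v - v'‖).indicator (fun w' => f w' * c v) w)
        ≤ f w * (Cgeo d s *
            ENNReal.ofReal (Λ * ((2:ℝ) ^ ((d:ℝ) + 2*s) * ‖w - v'‖ ^ (-((d:ℝ) + 2*s))))) := by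
    filter_upwards [h0] with w hw
    have hR : 0 < dist w v' / 2 := by
      have := dist_pos.mpr hw; linarith
    have hset : MeasurableSet {v : 𝔼 | dist w v < ‖v - v'‖} :=
      measurableSet_lt (measurable_const.dist measurable_id)
        (continuous_id.sub continuous_const).norm.measurable
    have hkey : (dist w v' / 2 : ℝ) ^ (-((d:ℝ) + 2*s))
        = (2:ℝ) ^ ((d:ℝ) + 2*s) * ‖w - v'‖ ^ (-((d:ℝ) + 2*s)) := by
      rw [div_eq_mul_inv, Real.mul_rpow dist_nonneg (by norm_num),
        Real.inv_rpow (by norm_num), Real.rpow_neg (by norm_num : (0:ℝ) ≤ 2), inv_inv,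
        dist_eq_norm, mul_comm]
    calc (∫⁻ v, (ball v ‖v - v'‖).indicator (fun w' => f w' * c v) w)
        = ∫⁻ v, Set.indicator {v : 𝔼 | dist w v < ‖v - v'‖} (fun v => f w * c v) v := by
          apply lintegral_congr; intro v
          rw [Set.indicator_apply, Set.indicator_apply, mem_ball]
          simp only [Set.mem_setOf_eq]
      _ = ∫⁻ v in {v : 𝔼 | dist w v < ‖v - v'‖}, f w * c v :=
          lintegral_indicator hset _
      _ = f w * ∫⁻ v in {v : 𝔼 | dist w v < ‖v - v'‖}, c v :=
          lintegral_const_mul' _ _ ENNReal.ofReal_ne_top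
      _ ≤ f w * ∫⁻ v in (ball v' (dist w v' / 2))ᶜ, c v := by
          refine mul_le_mul_right (lintegral_mono_set ?_) _
          intro v hv
          have h1 : dist w v < ‖v - v'‖ := hv
          have h2 : ‖v - v'‖ = dist v v' := (dist_eq_norm v v').symm
          have h3 : dist w v' ≤ dist w v + dist v v' := dist_triangle w v v'
          rw [mem_compl_iff, mem_ball, not_lt]
          rw [h2] at h1
          linarith
      _ ≤ f w * (Cgeo d s * ENNReal.ofReal (Λ * (dist w v' / 2) ^ (-((d:ℝ) + 2*s)))) := by
          refine mul_le_mul_right ?_ _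
          exact tail_decay hd hs hΛ v' (fun x => K x v') hF hR
      _ = f w * (Cgeo d s *
            ENNReal.ofReal (Λ * ((2:ℝ) ^ ((d:ℝ) + 2*s) * ‖w - v'‖ ^ (-((d:ℝ) + 2*s))))) := by
          rw [hkey]
  have hfin : Cgeo d s * ENNReal.ofReal Λ * ENNReal.ofReal ((2:ℝ) ^ ((d:ℝ) + 2*s)) ≠ ⊤ :=
    ENNReal.mul_ne_top (ENNReal.mul_ne_top (Cgeo_lt_top hd hs).ne ENNReal.ofReal_ne_top)
      ENNReal.ofReal_ne_top
  calc (∫⁻ v, ENNReal.ofReal (‖v - v'‖ ^ (-(d:ℝ))) *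
        (∫⁻ w in ball v ‖v - v'‖, ENNReal.ofReal (|g w - g v'|^2)) * ENNReal.ofReal |K v v'|)
      = ∫⁻ v, ∫⁻ w, (ball v ‖v - v'‖).indicator (fun w => f w * c v) w :=
        lintegral_congr key1
    _ = ∫⁻ w, ∫⁻ v, (ball v ‖v - v'‖).indicator (fun w' => f w' * c v) w := hswap
    _ ≤ ∫⁻ w, f w * (Cgeo d s *
          ENNReal.ofReal (Λ * ((2:ℝ) ^ ((d:ℝ) + 2*s) * ‖w - v'‖ ^ (-((d:ℝ) + 2*s))))) :=
        lintegral_mono_ae hae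
    _ = Cgeo d s * ENNReal.ofReal Λ * ENNReal.ofReal ((2:ℝ) ^ ((d:ℝ) + 2*s)) *
          ∫⁻ w, ENNReal.ofReal (|g w - g v'|^2 * ‖w - v'‖ ^ (-(d:ℝ) - 2*s)) := by
        rw [← lintegral_const_mul' _ _ hfin]
        apply lintegral_congr; intro w
        have h1 : (-(d:ℝ) - 2*s) = -((d:ℝ) + 2*s) := by ring
        rw [h1, ENNReal.ofReal_mul hΛ,
          ENNReal.ofReal_mul (by positivity : (0:ℝ) ≤ (2:ℝ) ^ ((d:ℝ) + 2*s)),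
          ENNReal.ofReal_mul (by positivity : (0:ℝ) ≤ |g w - g v'|^2), hf]
        ring

lemma pointwise_split (hd : 1 ≤ d) (g : 𝔼 → ℝ) (hg : Measurable g)
    (K : 𝔼 → 𝔼 → ℝ) (v v' : 𝔼) :
    ENNReal.ofReal (|g v - g v'|^2 * |K v v'|) ≤
      2 * (volume (ball (0:𝔼) 1))⁻¹ *
        (ENNReal.ofReal (‖v - v'‖ ^ (-(d:ℝ))) *
          (∫⁻ w in ball v ‖v - v'‖, ENNReal.ofReal (|g v - g w|^2)) * ENNReal.ofReal |K v v'|)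
      + 2 * (volume (ball (0:𝔼) 1))⁻¹ *
        (ENNReal.ofReal (‖v - v'‖ ^ (-(d:ℝ))) *
          (∫⁻ w in ball v ‖v - v'‖, ENNReal.ofReal (|g w - g v'|^2)) * ENNReal.ofReal |K v v'|) := by
  by_cases hvv : v = v'
  · subst hvv
    simp
  haveI : Inhabited (Fin d) := ⟨⟨0, hd⟩⟩
  haveI : Nontrivial 𝔼 := inferInstance
  have hr : 0 < ‖v - v'‖ := by
    rw [norm_pos_iff]
    exact sub_ne_zero.mpr hvv
  set r := ‖v - v'‖ with hrdef
  set ω := volume (ball (0:𝔼) 1) with hω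
  set k := ENNReal.ofReal |K v v'| with hk
  set a := ENNReal.ofReal (|g v - g v'|^2) with ha
  set f1 : 𝔼 → ℝ≥0∞ := fun w => ENNReal.ofReal (|g v - g w|^2) with hf1
  set f2 : 𝔼 → ℝ≥0∞ := fun w => ENNReal.ofReal (|g w - g v'|^2) with hf2
  have hf1m : Measurable f1 :=
    ((measurable_const.sub hg).abs.pow_const 2).ennreal_ofReal
  have hball : volume (ball v r) = ENNReal.ofReal (r ^ d) * ω := by
    rw [hω, Measure.addHaar_ball volume v hr.le, finrank_euclideanSpace_fin]
  have hV0 : volume (ball v r) ≠ 0 := (measure_ball_pos volume v hr).ne'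
  have hVt : volume (ball v r) ≠ ⊤ := measure_ball_lt_top.ne
  have hVinv : (volume (ball v r))⁻¹ = ENNReal.ofReal (r ^ (-(d:ℝ))) * ω⁻¹ := by
    rw [hball, ENNReal.mul_inv
      (Or.inl ((ENNReal.ofReal_pos.mpr (pow_pos hr d)).ne'))
      (Or.inl ENNReal.ofReal_ne_top)]
    congr 1
    rw [Real.rpow_neg hr.le, ← Real.rpow_natCast r d,
      ENNReal.ofReal_inv_of_pos (Real.rpow_pos_of_pos hr _)]
  have hpt : ∀ w : 𝔼, a ≤ 2 * f1 w + 2 * f2 w := by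
    intro w
    have hre : |g v - g v'|^2 ≤ 2*|g v - g w|^2 + 2*|g w - g v'|^2 := by
      rw [sq_abs, sq_abs, sq_abs]
      nlinarith [sq_nonneg ((g v - g w) - (g w - g v'))]
    calc a ≤ ENNReal.ofReal (2*|g v - g w|^2 + 2*|g w - g v'|^2) :=
          ENNReal.ofReal_le_ofReal hre
      _ = 2 * f1 w + 2 * f2 w := by
          rw [ENNReal.ofReal_add (by positivity) (by positivity),
            ENNReal.ofReal_mul (by norm_num), ENNReal.ofReal_mul (by norm_num),
            ENNReal.ofReal_ofNat]
  have hint : (∫⁻ _ in ball v r, a) ≤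
      2 * (∫⁻ w in ball v r, f1 w) + 2 * (∫⁻ w in ball v r, f2 w) := by
    calc (∫⁻ _ in ball v r, a) ≤ ∫⁻ w in ball v r, (2 * f1 w + 2 * f2 w) :=
        lintegral_mono fun w => hpt w
      _ = (∫⁻ w in ball v r, 2 * f1 w) + ∫⁻ w in ball v r, 2 * f2 w :=
        lintegral_add_left (hf1m.const_mul 2) _
      _ = 2 * (∫⁻ w in ball v r, f1 w) + 2 * (∫⁻ w in ball v r, f2 w) := by
        rw [lintegral_const_mul' 2 _ (by norm_num), lintegral_const_mul' 2 _ (by norm_num)]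
  have hvrepr : a = (volume (ball v r))⁻¹ * ∫⁻ _ in ball v r, a := by
    rw [setLIntegral_const, ← mul_assoc, mul_comm _ a, mul_assoc,
      ENNReal.inv_mul_cancel hV0 hVt, mul_one]
  calc ENNReal.ofReal (|g v - g v'|^2 * |K v v'|) = a * k := by
        rw [ha, hk, ENNReal.ofReal_mul (by positivity)]
    _ = ((volume (ball v r))⁻¹ * ∫⁻ _ in ball v r, a) * k := by rw [← hvrepr]
    _ ≤ ((volume (ball v r))⁻¹ *
          (2 * (∫⁻ w in ball v r, f1 w) + 2 * (∫⁻ w in ball v r, f2 w))) * k :=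
        mul_le_mul_left (mul_le_mul_right hint _) _
    _ = 2 * ω⁻¹ *
          (ENNReal.ofReal (r ^ (-(d:ℝ))) * (∫⁻ w in ball v r, f1 w) * k)
        + 2 * ω⁻¹ *
          (ENNReal.ofReal (r ^ (-(d:ℝ))) * (∫⁻ w in ball v r, f2 w) * k) := by
        rw [hVinv]
        ring

set_option maxHeartbeats 1000000 in
lemma main_aux (hd : 1 ≤ d) {s Λ : ℝ} (hs0 : 0 < s) (hΛ : 0 ≤ Λ)
    (K : 𝔼 → 𝔼 → ℝ) (hK : Measurable (Function.uncurry K)) (hTB : TailBounds d s Λ K)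
    (g : 𝔼 → ℝ) (hg : Measurable g) :
    (∫⁻ v, ∫⁻ v', ENNReal.ofReal (|g v - g v'| ^ 2 * |K v v'|)) ≤
      (2 * (volume (ball (0:𝔼) 1))⁻¹ * Cgeo d s * ENNReal.ofReal Λ *
        (1 + ENNReal.ofReal ((2:ℝ) ^ ((d:ℝ) + 2*s)))) *
      ∫⁻ v, ∫⁻ v', ENNReal.ofReal (|g v - g v'| ^ 2 * ‖v - v'‖ ^ (-(d:ℝ) - 2 * s)) := by
  classical
  set ω := volume (ball (0:𝔼) 1) with hω
  set D := ∫⁻ v, ∫⁻ v', ENNReal.ofReal (|g v - g v'| ^ 2 * ‖v - v'‖ ^ (-(d:ℝ) - 2 * s))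
    with hD
  set Q1 : 𝔼 → 𝔼 → ℝ≥0∞ := fun v v' => ENNReal.ofReal (‖v - v'‖ ^ (-(d:ℝ))) *
      (∫⁻ w in ball v ‖v - v'‖, ENNReal.ofReal (|g v - g w|^2)) * ENNReal.ofReal |K v v'|
    with hQ1def
  set Q2 : 𝔼 → 𝔼 → ℝ≥0∞ := fun v v' => ENNReal.ofReal (‖v - v'‖ ^ (-(d:ℝ))) *
      (∫⁻ w in ball v ‖v - v'‖, ENNReal.ofReal (|g w - g v'|^2)) * ENNReal.ofReal |K v v'|
    with hQ2def
  have hrp : Measurable fun t : ℝ => t ^ (-(d:ℝ)) := measurable_rpow_const' _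
  have hA : Measurable fun q : 𝔼 × 𝔼 => ENNReal.ofReal (‖q.1 - q.2‖ ^ (-(d:ℝ))) :=
    (hrp.comp ((continuous_fst.sub continuous_snd).norm.measurable)).ennreal_ofReal
  have hC : Measurable fun q : 𝔼 × 𝔼 => ENNReal.ofReal |K q.1 q.2| :=
    hK.abs.ennreal_ofReal
  have hmid1 : Measurable fun q : 𝔼 × 𝔼 =>
      ∫⁻ w in ball q.1 ‖q.1 - q.2‖, ENNReal.ofReal (|g q.1 - g w|^2) := by
    have heq : ∀ q : 𝔼 × 𝔼, (∫⁻ w in ball q.1 ‖q.1 - q.2‖, ENNReal.ofReal (|g q.1 - g w|^2))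
        = ∫⁻ w, Set.indicator {x : (𝔼 × 𝔼) × 𝔼 | dist x.2 x.1.1 < ‖x.1.1 - x.1.2‖}
            (fun x => ENNReal.ofReal (|g x.1.1 - g x.2|^2)) (q, w) := by
      intro q
      rw [← lintegral_indicator measurableSet_ball]
      apply lintegral_congr; intro w
      rw [Set.indicator_apply, Set.indicator_apply, mem_ball]
      simp only [Set.mem_setOf_eq]
    simp only [heq]
    apply Measurable.lintegral_prod_right'
    refine Measurable.indicator ?_ ?_
    · exact (((hg.comp measurable_fst.fst).sub (hg.comp measurable_snd)).abs.pow_const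
        2).ennreal_ofReal
    · exact measurableSet_lt (measurable_snd.dist measurable_fst.fst)
        ((continuous_fst.fst.sub continuous_fst.snd).norm.measurable)
  have hmid2 : Measurable fun q : 𝔼 × 𝔼 =>
      ∫⁻ w in ball q.1 ‖q.1 - q.2‖, ENNReal.ofReal (|g w - g q.2|^2) := by
    have heq : ∀ q : 𝔼 × 𝔼, (∫⁻ w in ball q.1 ‖q.1 - q.2‖, ENNReal.ofReal (|g w - g q.2|^2))
        = ∫⁻ w, Set.indicator {x : (𝔼 × 𝔼) × 𝔼 | dist x.2 x.1.1 < ‖x.1.1 - x.1.2‖}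
            (fun x => ENNReal.ofReal (|g x.2 - g x.1.2|^2)) (q, w) := by
      intro q
      rw [← lintegral_indicator measurableSet_ball]
      apply lintegral_congr; intro w
      rw [Set.indicator_apply, Set.indicator_apply, mem_ball]
      simp only [Set.mem_setOf_eq]
    simp only [heq]
    apply Measurable.lintegral_prod_right'
    refine Measurable.indicator ?_ ?_
    · exact (((hg.comp measurable_snd).sub (hg.comp measurable_fst.snd)).abs.pow_const
        2).ennreal_ofReal
    · exact measurableSet_lt (measurable_snd.dist measurable_fst.fst)
        ((continuous_fst.fst.sub continuous_fst.snd).norm.measurable)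
  have hQ1 : Measurable fun q : 𝔼 × 𝔼 => Q1 q.1 q.2 := (hA.mul hmid1).mul hC
  have hQ2 : Measurable fun q : 𝔼 × 𝔼 => Q2 q.1 q.2 := (hA.mul hmid2).mul hC
  have hω0 : ω ≠ 0 := (measure_ball_pos volume _ one_pos).ne'
  have hωinv : ω⁻¹ ≠ ⊤ := ENNReal.inv_ne_top.mpr hω0
  have hc2 : (2 : ℝ≥0∞) * ω⁻¹ ≠ ⊤ := ENNReal.mul_ne_top (by norm_num) hωinv
  have hCgeoΛ : Cgeo d s * ENNReal.ofReal Λ ≠ ⊤ :=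
    ENNReal.mul_ne_top (Cgeo_lt_top hd hs0).ne ENNReal.ofReal_ne_top
  -- step 1 & 2
  have step1 : (∫⁻ v, ∫⁻ v', ENNReal.ofReal (|g v - g v'| ^ 2 * |K v v'|))
      ≤ (∫⁻ v, ∫⁻ v', 2 * ω⁻¹ * Q1 v v') + ∫⁻ v, ∫⁻ v', 2 * ω⁻¹ * Q2 v v' := by
    have hinner : ∀ v, (∫⁻ v', ENNReal.ofReal (|g v - g v'| ^ 2 * |K v v'|))
        ≤ (∫⁻ v', 2 * ω⁻¹ * Q1 v v') + ∫⁻ v', 2 * ω⁻¹ * Q2 v v' := by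
      intro v
      calc (∫⁻ v', ENNReal.ofReal (|g v - g v'| ^ 2 * |K v v'|))
          ≤ ∫⁻ v', (2 * ω⁻¹ * Q1 v v' + 2 * ω⁻¹ * Q2 v v') :=
            lintegral_mono fun v' => pointwise_split hd g hg K v v'
        _ = (∫⁻ v', 2 * ω⁻¹ * Q1 v v') + ∫⁻ v', 2 * ω⁻¹ * Q2 v v' :=
            lintegral_add_left (((hQ1.comp measurable_prodMk_left).const_mul _)) _
    calc (∫⁻ v, ∫⁻ v', ENNReal.ofReal (|g v - g v'| ^ 2 * |K v v'|))
        ≤ ∫⁻ v, ((∫⁻ v', 2 * ω⁻¹ * Q1 v v') + ∫⁻ v', 2 * ω⁻¹ * Q2 v v') :=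
          lintegral_mono hinner
      _ = (∫⁻ v, ∫⁻ v', 2 * ω⁻¹ * Q1 v v') + ∫⁻ v, ∫⁻ v', 2 * ω⁻¹ * Q2 v v' :=
          lintegral_add_left ((hQ1.const_mul _).lintegral_prod_right') _
  -- pull out constants
  have pull1 : (∫⁻ v, ∫⁻ v', 2 * ω⁻¹ * Q1 v v') = 2 * ω⁻¹ * ∫⁻ v, ∫⁻ v', Q1 v v' := by
    rw [← lintegral_const_mul' _ _ hc2]
    apply lintegral_congr; intro v
    rw [← lintegral_const_mul' _ _ hc2]
  have pull2 : (∫⁻ v, ∫⁻ v', 2 * ω⁻¹ * Q2 v v') = 2 * ω⁻¹ * ∫⁻ v, ∫⁻ v', Q2 v v' := by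
    rw [← lintegral_const_mul' _ _ hc2]
    apply lintegral_congr; intro v
    rw [← lintegral_const_mul' _ _ hc2]
  -- T1 estimate
  have est1 : (∫⁻ v, ∫⁻ v', Q1 v v') ≤ Cgeo d s * ENNReal.ofReal Λ * D := by
    calc (∫⁻ v, ∫⁻ v', Q1 v v')
        ≤ ∫⁻ v, Cgeo d s * ENNReal.ofReal Λ *
            ∫⁻ w, ENNReal.ofReal (|g v - g w|^2 * ‖v - w‖ ^ (-(d:ℝ) - 2*s)) :=
          lintegral_mono fun v =>
            T1_bound hd hs0 hΛ K hK g hg v (fun r hr => (hTB v r hr).1)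
      _ = Cgeo d s * ENNReal.ofReal Λ * D := lintegral_const_mul' _ _ hCgeoΛ
  -- T2 estimate
  have hswap2 : (∫⁻ v, ∫⁻ v', Q2 v v') = ∫⁻ v', ∫⁻ v, Q2 v v' :=
    lintegral_lintegral_swap hQ2.aemeasurable
  have hFsym : Measurable (fun q : 𝔼 × 𝔼 =>
      ENNReal.ofReal (|g q.2 - g q.1|^2 * ‖q.2 - q.1‖ ^ (-(d:ℝ) - 2*s))) := by
    apply Measurable.ennreal_ofReal
    apply Measurable.mul
    · exact ((hg.comp measurable_snd).sub (hg.comp measurable_fst)).abs.pow_const 2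
    · have hrp2 : Measurable fun t : ℝ => t ^ (-(d:ℝ) - 2*s) := measurable_rpow_const' _
      exact hrp2.comp (continuous_snd.sub continuous_fst).norm.measurable
  have hDsym : (∫⁻ v', ∫⁻ w, ENNReal.ofReal (|g w - g v'|^2 * ‖w - v'‖ ^ (-(d:ℝ) - 2*s)))
      = D := by
    rw [hD]
    exact lintegral_lintegral_swap hFsym.aemeasurable
  have est2 : (∫⁻ v, ∫⁻ v', Q2 v v')
      ≤ Cgeo d s * ENNReal.ofReal Λ * ENNReal.ofReal ((2:ℝ) ^ ((d:ℝ) + 2*s)) * D := by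
    rw [hswap2]
    calc (∫⁻ v', ∫⁻ v, Q2 v v')
        ≤ ∫⁻ v', Cgeo d s * ENNReal.ofReal Λ * ENNReal.ofReal ((2:ℝ) ^ ((d:ℝ) + 2*s)) *
            ∫⁻ w, ENNReal.ofReal (|g w - g v'|^2 * ‖w - v'‖ ^ (-(d:ℝ) - 2*s)) :=
          lintegral_mono fun v' =>
            T2_bound hd hs0 hΛ K hK g hg v' (fun r hr => (hTB v' r hr).2)
      _ = Cgeo d s * ENNReal.ofReal Λ * ENNReal.ofReal ((2:ℝ) ^ ((d:ℝ) + 2*s)) *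
            ∫⁻ v', ∫⁻ w, ENNReal.ofReal (|g w - g v'|^2 * ‖w - v'‖ ^ (-(d:ℝ) - 2*s)) :=
          lintegral_const_mul' _ _
            (ENNReal.mul_ne_top hCgeoΛ ENNReal.ofReal_ne_top)
      _ = Cgeo d s * ENNReal.ofReal Λ * ENNReal.ofReal ((2:ℝ) ^ ((d:ℝ) + 2*s)) * D := by
          rw [hDsym]
  calc (∫⁻ v, ∫⁻ v', ENNReal.ofReal (|g v - g v'| ^ 2 * |K v v'|))
      ≤ (∫⁻ v, ∫⁻ v', 2 * ω⁻¹ * Q1 v v') + ∫⁻ v, ∫⁻ v', 2 * ω⁻¹ * Q2 v v' := step1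
    _ = 2 * ω⁻¹ * (∫⁻ v, ∫⁻ v', Q1 v v') + 2 * ω⁻¹ * (∫⁻ v, ∫⁻ v', Q2 v v') := by
        rw [pull1, pull2]
    _ ≤ 2 * ω⁻¹ * (Cgeo d s * ENNReal.ofReal Λ * D)
        + 2 * ω⁻¹ * (Cgeo d s * ENNReal.ofReal Λ * ENNReal.ofReal ((2:ℝ) ^ ((d:ℝ) + 2*s)) * D) := by
        gcongr
    _ = (2 * ω⁻¹ * Cgeo d s * ENNReal.ofReal Λ *
          (1 + ENNReal.ofReal ((2:ℝ) ^ ((d:ℝ) + 2*s)))) * D := by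
        ring

end Main

/-- **Upper bound for the symmetric part of the bilinear form.** If `K` satisfies the
tail bounds with constant `Λ`, then there is a constant `C`, depending only on `d`, `s`
and `Λ`, such that for every measurable `g`
`∬ |g(v) - g(v')|² |K(v,v')| dv' dv ≤ C ‖g‖²_{Ḣ^s}`, as an inequality in `[0,∞]`. -/
theorem symmetric_form_upper_bound (d : ℕ) (hd : 1 ≤ d) (s : ℝ)
    (hs : s ∈ Set.Ioo (0 : ℝ) 1) (Λ : ℝ) (hΛ : 0 < Λ) :
    ∃ C : ℝ, 0 < C ∧
      ∀ (K : EuclideanSpace ℝ (Fin d) → EuclideanSpace ℝ (Fin d) → ℝ),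
        Measurable (Function.uncurry K) → TailBounds d s Λ K →
      ∀ (g : EuclideanSpace ℝ (Fin d) → ℝ), Measurable g →
        (∫⁻ v, ∫⁻ v', ENNReal.ofReal (|g v - g v'| ^ 2 * |K v v'|)) ≤
          ENNReal.ofReal C *
            ∫⁻ v, ∫⁻ v', ENNReal.ofReal
              (|g v - g v'| ^ 2 * ‖v - v'‖ ^ (-(d : ℝ) - 2 * s)) := by

  obtain ⟨hs0, hs1⟩ := hs
  set Chat := 2 * (volume (ball (0 : EuclideanSpace ℝ (Fin d)) 1))⁻¹ * Cgeo d s *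
      ENNReal.ofReal Λ * (1 + ENNReal.ofReal ((2:ℝ) ^ ((d:ℝ) + 2*s))) with hChat
  have hω0 : (volume (ball (0 : EuclideanSpace ℝ (Fin d)) 1)) ≠ 0 :=
    (measure_ball_pos volume _ one_pos).ne'
  have hfin : Chat ≠ ⊤ := by
    rw [hChat]
    refine ENNReal.mul_ne_top (ENNReal.mul_ne_top (ENNReal.mul_ne_top
      (ENNReal.mul_ne_top (by norm_num) (ENNReal.inv_ne_top.mpr hω0))
      (Cgeo_lt_top hd hs0).ne) ENNReal.ofReal_ne_top) ?_
    exact ENNReal.add_ne_top.mpr ⟨ENNReal.one_ne_top, ENNReal.ofReal_ne_top⟩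
  have hCpos : (0:ℝ) < Chat.toReal + 1 := by
    have := ENNReal.toReal_nonneg (a := Chat)
    linarith
  refine ⟨Chat.toReal + 1, hCpos, ?_⟩
  intro K hK hTB g hg
  refine (main_aux hd hs0 hΛ.le K hK hTB g hg).trans (mul_le_mul_left ?_ _)
  calc Chat = ENNReal.ofReal Chat.toReal := (ENNReal.ofReal_toReal hfin).symm
    _ ≤ ENNReal.ofReal (Chat.toReal + 1) := ENNReal.ofReal_le_ofReal (by linarith)
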